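/- Let f be the exponential generating function of the Catalan numbers. Then t·(4 − f'(t)/f(t)) tends to 3/2 as t → +∞; equivalently, f'(t)/f(t) = 4 − 3/(2t) + O(1/t^2) as t → +∞. -/

import Mathlib

/-!
Write `f t = ∑ aₙ tⁿ` with `aₙ = Cₙ / n!`. The recurrence `(n + 2) Cₙ₊₁ = (4n + 2) Cₙ` turns
`t (4 f - f')` into `∑ rₙ aₙ tⁿ` with `rₙ = 6n / (4n - 2) → 3/2`. Since the `aₙ` are positive and
`f` outgrows every polynomial, an Abelian argument shows that the ratio `∑ rₙ aₙ tⁿ / ∑ aₙ tⁿ` of two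
entire series has the same limit as the ratio `rₙ` of their coefficients.
-/

open scoped Nat
open Filter Topology Asymptotics Finset

/-- The exponential generating function of the Catalan numbers. -/
noncomputable def catalanEGF (t : ℝ) : ℝ := ∑' n : ℕ, (catalan n : ℝ) * t ^ n / n !

section EntireSeries

variable {a : ℕ → ℝ}

theorem summable_mul_pow_of_isBigO {d : ℕ → ℝ} (ha : ∀ n, 0 ≤ a n)
    (hs : ∀ t, Summable fun n => a n * t ^ n) (hd : d =O[atTop] a) (t : ℝ) :
    Summable fun n => d n * t ^ n := by
  obtain ⟨C, hC⟩ := hd.bound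
  refine .of_norm_bounded_eventually_nat ((hs |t|).mul_left C) ?_
  filter_upwards [hC] with n hn
  rw [Real.norm_of_nonneg (ha n)] at hn
  rw [norm_mul, norm_pow, Real.norm_eq_abs t, ← mul_assoc]
  gcongr

theorem isLittleO_pow_tsum_mul_pow (ha : ∀ n, 0 ≤ a n) (hs : ∀ t, Summable fun n => a n * t ^ n)
    {m n : ℕ} (hm : 0 < a m) (hnm : n < m) :
    (fun t : ℝ => t ^ n) =o[atTop] fun t => ∑' k, a k * t ^ k := by
  refine (isLittleO_pow_pow_atTop_of_lt hnm).trans_isBigO (.of_bound (a m)⁻¹ ?_)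
  filter_upwards [eventually_ge_atTop 0] with t ht
  have hle : a m * t ^ m ≤ ∑' k, a k * t ^ k :=
    (hs t).le_tsum m fun k _ => mul_nonneg (ha k) (by positivity)
  rw [Real.norm_of_nonneg (by positivity),
    Real.norm_of_nonneg ((by positivity : 0 ≤ a m * t ^ m).trans hle), inv_mul_eq_div,
    le_div_iff₀ hm]
  linarith

/- The first `M` terms form a polynomial of degree `< m`, which is `o(∑ aₖ tᵏ)` because `aₘ > 0`;
past `M`, `|dₙ| ≤ c/2 · aₙ` bounds the tail by `c/2 · ∑ aₖ tᵏ`. -/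
theorem isLittleO_tsum_mul_pow {d : ℕ → ℝ} (ha : ∀ n, 0 ≤ a n) (ha' : ∃ᶠ n in atTop, 0 < a n)
    (hs : ∀ t, Summable fun n => a n * t ^ n) (hd : d =o[atTop] a) :
    (fun t => ∑' n, d n * t ^ n) =o[atTop] fun t => ∑' n, a n * t ^ n := by
  refine IsLittleO.of_bound fun c hc => ?_
  obtain ⟨M, hM⟩ := eventually_atTop.1 (hd.bound (half_pos hc))
  obtain ⟨m, hMm, hm⟩ := frequently_atTop.1 ha' M
  have hhead : (fun t => ∑ n ∈ range M, d n * t ^ n) =o[atTop] fun t => ∑' n, a n * t ^ n :=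
    IsLittleO.fun_sum fun n hn =>
      (isLittleO_pow_tsum_mul_pow ha hs hm ((mem_range.1 hn).trans_le hMm)).const_mul_left (d n)
  filter_upwards [hhead.bound (half_pos hc), eventually_ge_atTop 0] with t hH ht
  have hterm : ∀ n, ‖d (n + M) * t ^ (n + M)‖ ≤ c / 2 * (a (n + M) * t ^ (n + M)) := fun n => by
    have hdM := hM (n + M) (Nat.le_add_left M n)
    rw [Real.norm_of_nonneg (ha _)] at hdM
    rw [norm_mul, norm_pow, Real.norm_of_nonneg ht, ← mul_assoc]
    gcongr
  have htail : ‖∑' n, d (n + M) * t ^ (n + M)‖ ≤ c / 2 * ∑' n, a n * t ^ n := by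
    refine (tsum_of_norm_bounded (((summable_nat_add_iff M).2 (hs t)).mul_left _).hasSum
      hterm).trans ?_
    rw [tsum_mul_left, ← (hs t).sum_add_tsum_nat_add M]
    gcongr
    exact le_add_of_nonneg_left (sum_nonneg fun n _ => mul_nonneg (ha n) (by positivity))
  have hf : 0 ≤ ∑' n, a n * t ^ n := tsum_nonneg fun n => mul_nonneg (ha n) (by positivity)
  rw [← (summable_mul_pow_of_isBigO ha hs hd.isBigO t).sum_add_tsum_nat_add M,
    Real.norm_of_nonneg hf]
  rw [Real.norm_of_nonneg hf] at hH
  calc _ ≤ ‖∑ n ∈ range M, d n * t ^ n‖ + ‖∑' n, d (n + M) * t ^ (n + M)‖ := norm_add_le _ _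
    _ ≤ c / 2 * ∑' n, a n * t ^ n + c / 2 * ∑' n, a n * t ^ n := add_le_add hH htail
    _ = c * ∑' n, a n * t ^ n := by ring

theorem tendsto_tsum_mul_pow_div_tsum_mul_pow {r : ℕ → ℝ} {L : ℝ} (ha : ∀ n, 0 ≤ a n)
    (ha' : ∃ᶠ n in atTop, 0 < a n) (hs : ∀ t, Summable fun n => a n * t ^ n)
    (hr : Tendsto r atTop (𝓝 L)) :
    Tendsto (fun t => (∑' n, r n * a n * t ^ n) / ∑' n, a n * t ^ n) atTop (𝓝 L) := by
  have hd : (fun n => (r n - L) * a n) =o[atTop] a := by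
    simpa using (isLittleO_one_iff ℝ).2 (tendsto_sub_nhds_zero_iff.2 hr) |>.mul_isBigO
      (isBigO_refl a atTop)
  have hlim := (isLittleO_tsum_mul_pow ha ha' hs hd).tendsto_div_nhds_zero.const_add L
  rw [add_zero] at hlim
  refine hlim.congr' ?_
  obtain ⟨m, hm⟩ := ha'.exists
  filter_upwards [eventually_gt_atTop 0] with t ht
  have hf : 0 < ∑' n, a n * t ^ n :=
    (by positivity : 0 < a m * t ^ m).trans_le <|
      (hs t).le_tsum m fun k _ => mul_nonneg (ha k) (by positivity)
  have hrBigO : (fun n => r n * a n) =O[atTop] a := by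
    simpa using (hr.isBigO_one ℝ).mul (isBigO_refl a atTop)
  have hra := summable_mul_pow_of_isBigO ha hs hrBigO t
  simp only [sub_mul, mul_assoc] at hra ⊢
  rw [hra.tsum_sub ((hs t).mul_left L), tsum_mul_left]
  field_simp
  ring

end EntireSeries

theorem hasDerivAt_tsum_mul_pow_div_factorial {b : ℕ → ℝ}
    (hb : ∀ r, Summable fun n => |b (n + 1)| * r ^ n / n !) (t : ℝ) :
    HasDerivAt (fun x => ∑' n, b n * x ^ n / n !) (∑' n, b (n + 1) * t ^ n / n !) t := by
  have hterm : ∀ n y, HasDerivAt (fun x => b (n + 1) * x ^ (n + 1) / (n + 1)!)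
      (b (n + 1) * y ^ n / n !) y := fun n y => by
    refine (((hasDerivAt_pow (n + 1) y).const_mul _).div_const _).congr_deriv ?_
    rw [Nat.factorial_succ]
    push_cast
    field_simp
  have hsummable : ∀ x, Summable fun n => b n * x ^ n / n ! := fun x => by
    refine (summable_nat_add_iff 1).1 (.of_norm_bounded ((hb |x|).mul_right |x|) fun n => ?_)
    rw [Real.norm_eq_abs, abs_div, abs_mul, abs_pow, Nat.abs_cast, Nat.factorial_succ,
      Nat.cast_mul, pow_succ, mul_comm ((n + 1 : ℕ) : ℝ), ← div_div]
    refine (div_le_self (by positivity) (by simp)).trans_eq ?_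
    ring
  have hfun : (fun x => ∑' n, b n * x ^ n / n !) =
      fun x => b 0 + ∑' n, b (n + 1) * x ^ (n + 1) / (n + 1)! := funext fun x => by
    rw [(hsummable x).tsum_eq_zero_add]
    simp
  set R := |t| + 1
  have hbound : ∀ n, ∀ y ∈ Set.Ioo (-R) R,
      ‖b (n + 1) * y ^ n / (n ! : ℝ)‖ ≤ |b (n + 1)| * R ^ n / n ! := fun n y hy => by
    rw [Real.norm_eq_abs, abs_div, abs_mul, abs_pow, Nat.abs_cast]
    gcongr
    exact (abs_lt.2 hy).le
  have h0 : (0 : ℝ) ∈ Set.Ioo (-R) R := abs_lt.1 (by rw [abs_zero]; positivity)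
  have ht : t ∈ Set.Ioo (-R) R := abs_lt.1 (lt_add_one _)
  rw [hfun]
  exact (hasDerivAt_tsum_of_isPreconnected (hb R) isOpen_Ioo (convex_Ioo (-R) R).isPreconnected
    (fun n y _ => hterm n y) hbound h0 ((summable_nat_add_iff 1).2 (hsummable 0)) ht).const_add _

theorem catalan_pos (n : ℕ) : 0 < catalan n :=
  Nat.pos_of_mul_pos_left ((succ_mul_catalan_eq_centralBinom n).symm ▸ n.centralBinom_pos)

theorem catalan_le_four_pow (n : ℕ) : catalan n ≤ 4 ^ n :=
  calc catalan n ≤ (n + 1) * catalan n := Nat.le_mul_of_pos_left _ n.succ_pos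
    _ = n.centralBinom := succ_mul_catalan_eq_centralBinom n
    _ ≤ 4 ^ n := n.centralBinom_le_four_pow

theorem add_two_mul_catalan_succ (n : ℕ) :
    (n + 2) * catalan (n + 1) = (4 * n + 2) * catalan n := by
  refine Nat.eq_of_mul_eq_mul_left n.succ_pos ?_
  calc (n + 1) * ((n + 2) * catalan (n + 1)) = (n + 1) * (n + 1).centralBinom := by
        rw [← succ_mul_catalan_eq_centralBinom]
    _ = (n + 1) * ((4 * n + 2) * catalan n) := by
        rw [Nat.succ_mul_centralBinom_succ, ← succ_mul_catalan_eq_centralBinom]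
        ring

theorem summable_catalan_add_mul_pow_div_factorial (k : ℕ) (t : ℝ) :
    Summable fun n => (catalan (n + k) : ℝ) * t ^ n / n ! := by
  refine .of_norm_bounded ((Real.summable_pow_div_factorial (4 * |t|)).mul_left (4 ^ k))
    fun n => ?_
  rw [Real.norm_eq_abs, abs_div, abs_mul, abs_pow, Nat.abs_cast, Nat.abs_cast, mul_pow,
    ← mul_div_assoc, ← mul_assoc, ← pow_add, add_comm k]
  gcongr
  exact_mod_cast catalan_le_four_pow (n + k)

theorem hasDerivAt_catalanEGF (t : ℝ) :
    HasDerivAt catalanEGF (∑' n, (catalan (n + 1) : ℝ) * t ^ n / n !) t :=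
  hasDerivAt_tsum_mul_pow_div_factorial (fun r => by
    simpa only [Nat.abs_cast] using summable_catalan_add_mul_pow_div_factorial 1 r) t

theorem catalanEGF_eq_tsum (t : ℝ) : catalanEGF t = ∑' n, (catalan n : ℝ) / n ! * t ^ n :=
  tsum_congr fun _ => mul_div_right_comm _ _ _

theorem catalanEGF_pos {t : ℝ} (ht : 0 ≤ t) : 0 < catalanEGF t :=
  calc 0 < (catalan 0 : ℝ) * t ^ 0 / 0 ! := by simp
    _ ≤ catalanEGF t :=
      (summable_catalan_add_mul_pow_div_factorial 0 t).le_tsum 0 fun n _ => by positivity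

theorem four_mul_catalan_sub_catalan_succ_div_factorial (n : ℕ) :
    (4 * catalan n - catalan (n + 1) : ℝ) / n ! =
      6 * (n + 1 : ℕ) / (4 * (n + 1 : ℕ) - 2) * ((catalan (n + 1) : ℝ) / (n + 1)!) := by
  have hrec : ((n : ℝ) + 2) * catalan (n + 1) = (4 * n + 2) * catalan n := by
    exact_mod_cast add_two_mul_catalan_succ n
  have hden : (4 * ((n : ℝ) + 1) - 2) ≠ 0 := by linarith [n.cast_nonneg (α := ℝ)]
  rw [Nat.factorial_succ]
  push_cast
  field_simp
  linear_combination (-4) * hrec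

/- The coefficient `6n / (4n - 2)` vanishes at `n = 0`, so the series on the right starts at `t¹`
and absorbs the factor `t`. -/
theorem mul_four_mul_catalanEGF_sub_deriv (t : ℝ) :
    t * (4 * catalanEGF t - deriv catalanEGF t) =
      ∑' n : ℕ, 6 * n / (4 * n - 2) * ((catalan n : ℝ) / n !) * t ^ n := by
  have hf : Summable fun n => (catalan n : ℝ) * t ^ n / n ! :=
    summable_catalan_add_mul_pow_div_factorial 0 t
  have hf' := summable_catalan_add_mul_pow_div_factorial 1 t
  have hterm : ∀ n : ℕ, 6 * (n + 1 : ℕ) / (4 * (n + 1 : ℕ) - 2) *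
      ((catalan (n + 1) : ℝ) / (n + 1)!) * t ^ (n + 1) =
        t * (4 * (catalan n * t ^ n / n !) - catalan (n + 1) * t ^ n / n !) := fun n => by
    rw [← four_mul_catalan_sub_catalan_succ_div_factorial, pow_succ]
    ring
  have hsum := (((hf.mul_left 4).sub hf').mul_left t).congr fun n => (hterm n).symm
  rw [tsum_eq_zero_add' (f := fun n : ℕ => 6 * (n : ℝ) / (4 * n - 2) * ((catalan n : ℝ) / n !) *
    t ^ n) hsum, tsum_congr hterm, tsum_mul_left, (hf.mul_left 4).tsum_sub hf', tsum_mul_left,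
    (hasDerivAt_catalanEGF t).deriv, catalanEGF]
  simp

theorem tendsto_six_mul_div_four_mul_sub_two :
    Tendsto (fun n : ℕ => 6 * n / (4 * n - 2 : ℝ)) atTop (𝓝 (3 / 2)) := by
  have hden : Tendsto (fun n : ℕ => 4 * n - 2 : ℕ → ℝ) atTop atTop :=
    tendsto_atTop_add_const_right _ _ <|
      tendsto_natCast_atTop_atTop.const_mul_atTop (by norm_num)
  have hlim := (tendsto_const_nhds (x := (3 : ℝ))).div_atTop hden |>.const_add (3 / 2)
  rw [add_zero] at hlim
  refine hlim.congr fun n => ?_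
  have hn : (4 * n - 2 : ℝ) ≠ 0 := sub_ne_zero.2 fun h => by norm_cast at h; omega
  field_simp
  ring

/-- For the exponential generating function f of the Catalan numbers,
t·(4 − f'(t)/f(t)) tends to 3/2 as t → +∞; i.e.
f'(t)/f(t) = 4 − 3/(2t) + O(1/t²) as t → +∞. -/
theorem catalan_egf_logderiv_correction_tendsto :
    Filter.Tendsto (fun t : ℝ => t * (4 - deriv catalanEGF t / catalanEGF t))
      Filter.atTop (nhds (3 / 2)) := by
  have hlim := tendsto_tsum_mul_pow_div_tsum_mul_pow (a := fun n => (catalan n : ℝ) / n !)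
    (fun n => by positivity) (.of_forall fun n => by have := catalan_pos n; positivity)
    (fun t => (summable_catalan_add_mul_pow_div_factorial 0 t).congr
      fun _ => mul_div_right_comm _ _ _)
    tendsto_six_mul_div_four_mul_sub_two
  refine hlim.congr' ?_
  filter_upwards [eventually_ge_atTop 0] with t ht
  rw [← catalanEGF_eq_tsum, ← mul_four_mul_catalanEGF_sub_deriv]
  field_simp [(catalanEGF_pos ht).ne']
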